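/- arXiv:1809.06282 — 2 statements merged into one kernel-verified Lean document; each statement's English description precedes it below -/
import Mathlib

section
/- Twinning Lemma, helical case: Let μ be a 2×2 real matrix and t ∈ ℝ² a nonzero vector. There exist linearly independent f, g ∈ ℝ² with f·((μ+I)t) = 0, g·((μ−I)t) = 0, f·t ≠ 0 and g·t ≠ 0 if and only if t is not an eigenvector of μ. -/
open Matrix

theorem twinning_lemma_helical (μ : Matrix (Fin 2) (Fin 2) ℝ)
    (t : Fin 2 → ℝ) (ht : t ≠ 0) :
    (∃ f g : Fin 2 → ℝ, LinearIndependent ℝ ![f, g] ∧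
        f ⬝ᵥ ((μ + 1) *ᵥ t) = 0 ∧ g ⬝ᵥ ((μ - 1) *ᵥ t) = 0 ∧
        f ⬝ᵥ t ≠ 0 ∧ g ⬝ᵥ t ≠ 0) ↔
    ¬ ∃ lam : ℝ, μ *ᵥ t = lam • t := by
  set u : Fin 2 → ℝ := μ *ᵥ t with hu
  have hadd : (μ + 1) *ᵥ t = u + t := by
    simp [hu, Matrix.add_mulVec, Matrix.one_mulVec]
  have hsub : (μ - 1) *ᵥ t = u - t := by
    simp [hu, Matrix.sub_mulVec, Matrix.one_mulVec]
  rw [hadd, hsub]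
  constructor
  · rintro ⟨f, g, hli, hf, hg, hft, hgt⟩ ⟨lam, hlam⟩
    rw [hlam] at hf hg
    have h1 : (lam + 1) * (f ⬝ᵥ t) = 0 := by
      have : f ⬝ᵥ (lam • t + t) = lam * (f ⬝ᵥ t) + f ⬝ᵥ t := by
        simp [dotProduct_add, dotProduct_smul]
      rw [this] at hf; linarith [hf]
    have h2 : (lam - 1) * (g ⬝ᵥ t) = 0 := by
      have : g ⬝ᵥ (lam • t - t) = lam * (g ⬝ᵥ t) - g ⬝ᵥ t := by
        simp [dotProduct_sub, dotProduct_smul]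
      rw [this] at hg; linarith [hg]
    have e1 : lam = -1 := by
      rcases mul_eq_zero.mp h1 with h | h
      · linarith
      · exact absurd h hft
    have e2 : lam = 1 := by
      rcases mul_eq_zero.mp h2 with h | h
      · linarith
      · exact absurd h hgt
    linarith
  · intro h
    have hD : u 0 * t 1 - u 1 * t 0 ≠ 0 := by
      intro hD0
      apply h
      have htne : t 0 ≠ 0 ∨ t 1 ≠ 0 := by
        by_contra hc
        push_neg at hc
        apply ht
        funext i
        fin_cases i <;> simp [hc.1, hc.2]
      rcases htne with h0 | h1
      · refine ⟨u 0 / t 0, funext fun i => ?_⟩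
        fin_cases i <;> simp [Pi.smul_apply, smul_eq_mul] <;> field_simp <;> nlinarith [hD0]
      · refine ⟨u 1 / t 1, funext fun i => ?_⟩
        fin_cases i <;> simp [Pi.smul_apply, smul_eq_mul] <;> field_simp <;> nlinarith [hD0]
    refine ⟨![-(u 1 + t 1), u 0 + t 0], ![-(u 1 - t 1), u 0 - t 0], ?_, ?_, ?_, ?_, ?_⟩
    · rw [linearIndependent_fin2]
      constructor
      · intro hg0
        have h0 : -(u 1 - t 1) = 0 := congrFun hg0 0
        have h1 : u 0 - t 0 = 0 := congrFun hg0 1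
        simp at h0 h1
        apply hD; linear_combination t 1 * h1 + t 0 * h0
      · intro a hag
        have h0 : a * -(u 1 - t 1) = -(u 1 + t 1) := by
          simpa using congrFun hag 0
        have h1 : a * (u 0 - t 0) = u 0 + t 0 := by
          simpa using congrFun hag 1
        apply hD
        linear_combination ((u 1 - t 1)/2) * h1 + ((u 0 - t 0)/2) * h0
    · simp [dotProduct, Fin.sum_univ_two]; ring
    · simp [dotProduct, Fin.sum_univ_two]; ring
    · simp only [dotProduct, Fin.sum_univ_two, Matrix.cons_val_zero,
        Matrix.cons_val_one, Matrix.head_cons]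
      intro hc; apply hD; nlinarith
    · simp only [dotProduct, Fin.sum_univ_two, Matrix.cons_val_zero,
        Matrix.cons_val_one, Matrix.head_cons]
      intro hc; apply hD; nlinarith
end

section
/- Let f(s) = ρ_a cos(x(s)·f_a + θ_a) − ρ_b cos(x(s)·f_b + θ_b) where x : (s₁,s₂) → ℝ² is smooth, f_b = λ f_a with f_a ≠ 0, λ ≠ 0. Suppose f(s) is constant on (s₁,s₂) and there is s* with x'(s*)·f_a ≠ 0. If moreover the first and third derivatives of f vanish identically near s*, and ρ_a, ρ_b > 0, then λ² = 1. -/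
open Matrix Real

theorem lambda_sq_eq_one
    (x : ℝ → Fin 2 → ℝ) (hx : ContDiff ℝ 3 x)
    (s₁ s₂ sstar : ℝ) (hs : sstar ∈ Set.Ioo s₁ s₂)
    (fa : Fin 2 → ℝ) (hfa : fa ≠ 0) (lam : ℝ) (hlam : lam ≠ 0)
    (fb : Fin 2 → ℝ) (hfb : fb = lam • fa)
    (ρa ρb θa θb : ℝ) (hρa : 0 < ρa) (hρb : 0 < ρb)
    (F : ℝ → ℝ)
    (hF : ∀ s, F s = ρa * Real.cos (x s ⬝ᵥ fa + θa) - ρb * Real.cos (x s ⬝ᵥ fb + θb))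
    (c : ℝ) (hconst : ∀ s ∈ Set.Ioo s₁ s₂, F s = c)
    (hderiv : deriv x sstar ⬝ᵥ fa ≠ 0)
    (ε : ℝ) (hε : 0 < ε)
    (hd1 : ∀ s ∈ Set.Ioo (sstar - ε) (sstar + ε), deriv F s = 0)
    (hd3 : ∀ s ∈ Set.Ioo (sstar - ε) (sstar + ε), deriv (deriv (deriv F)) s = 0) :
    lam ^ 2 = 1 := by
  classical
  set u : ℝ → ℝ := fun s => x s ⬝ᵥ fa with hu_def
  set du : ℝ → ℝ := fun s => deriv x s ⬝ᵥ fa with hdu_def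
  have hxdiff : Differentiable ℝ x := hx.differentiable (by norm_num)
  -- u has derivative du
  have hu : ∀ s, HasDerivAt u (du s) s := by
    intro s
    have hx' : HasDerivAt x (deriv x s) s := (hxdiff s).hasDerivAt
    have h0 : HasDerivAt (fun t => x t 0) (deriv x s 0) s := hasDerivAt_pi.mp hx' 0
    have h1 : HasDerivAt (fun t => x t 1) (deriv x s 1) s := hasDerivAt_pi.mp hx' 1
    have := (h0.mul_const (fa 0)).add (h1.mul_const (fa 1))
    simpa [hu_def, hdu_def, dotProduct, Fin.sum_univ_two, Pi.add_def] using this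
  -- du is continuous
  have hdcont : Continuous du := by
    have h := hx.continuous_deriv (by norm_num)
    have : Continuous fun s => ∑ i : Fin 2, deriv x s i * fa i :=
      continuous_finset_sum _ fun i _ => ((continuous_apply i).comp h).mul continuous_const
    simpa [hdu_def, dotProduct] using this
  have hne : du sstar ≠ 0 := hderiv
  -- rewrite F
  have hFe : F = fun s => ρa * Real.cos (u s + θa) - ρb * Real.cos (lam * u s + θb) := by
    funext s
    rw [hF s, hfb]
    have : x s ⬝ᵥ (lam • fa) = lam * (x s ⬝ᵥ fa) := by
      simp [dotProduct, Fin.sum_univ_two]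
      ring
    rw [this]
  rw [hFe] at hd1
  -- first relation on the big interval
  have hA : ∀ s ∈ Set.Ioo (sstar - ε) (sstar + ε),
      (ρa * Real.sin (u s + θa) - lam * ρb * Real.sin (lam * u s + θb)) * du s = 0 := by
    intro s hs'
    have dc1 : HasDerivAt (fun s => Real.cos (u s + θa)) (-Real.sin (u s + θa) * du s) s :=
      ((hu s).add_const θa).cos
    have dc2 : HasDerivAt (fun s => Real.cos (lam * u s + θb))
        (-Real.sin (lam * u s + θb) * (lam * du s)) s :=
      (((hu s).const_mul lam).add_const θb).cos
    have hD := ((dc1.const_mul ρa).sub (dc2.const_mul ρb)).deriv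
    simp only [Pi.sub_def] at hD
    rw [hd1 s hs'] at hD
    nlinarith [hD]
  -- find a small open interval around sstar where du ≠ 0
  have hSopen : IsOpen (Set.Ioo (sstar - ε) (sstar + ε) ∩ {s | du s ≠ 0}) :=
    isOpen_Ioo.inter (isOpen_compl_singleton.preimage hdcont)
  have hSmem : sstar ∈ Set.Ioo (sstar - ε) (sstar + ε) ∩ {s | du s ≠ 0} :=
    ⟨⟨by linarith, by linarith⟩, hne⟩
  obtain ⟨δ, hδpos, hball⟩ := Metric.isOpen_iff.mp hSopen sstar hSmem
  set J : Set ℝ := Set.Ioo (sstar - δ) (sstar + δ) with hJ_def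
  have hJsub : J ⊆ Set.Ioo (sstar - ε) (sstar + ε) ∩ {s | du s ≠ 0} := by
    intro t ht
    exact hball (by rw [Real.ball_eq_Ioo]; exact ht)
  have hJopen : IsOpen J := isOpen_Ioo
  have hsJ : sstar ∈ J := ⟨by linarith, by linarith⟩
  have hdu_ne : ∀ s ∈ J, du s ≠ 0 := fun s hsj => (hJsub hsj).2
  -- A = 0 on J
  have hA0 : ∀ s ∈ J,
      ρa * Real.sin (u s + θa) - lam * ρb * Real.sin (lam * u s + θb) = 0 := by
    intro s hsj
    exact (mul_eq_zero.mp (hA s (hJsub hsj).1)).resolve_right (hdu_ne s hsj)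
  -- derivative of A vanishes on J (A is identically 0 on open J)
  have hAloc : ∀ s ∈ J, deriv
      (fun s => ρa * Real.sin (u s + θa) - lam * ρb * Real.sin (lam * u s + θb)) s = 0 := by
    intro s hsj
    have hev : (fun s => ρa * Real.sin (u s + θa) - lam * ρb * Real.sin (lam * u s + θb))
        =ᶠ[nhds s] fun _ => (0 : ℝ) :=
      Filter.eventuallyEq_of_mem (hJopen.mem_nhds hsj) (fun t ht => hA0 t ht)
    rw [hev.deriv_eq, deriv_const]
  -- B = 0 on J
  have hB0 : ∀ s ∈ J,
      ρa * Real.cos (u s + θa) - lam ^ 2 * ρb * Real.cos (lam * u s + θb) = 0 := by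
    intro s hsj
    have ds1 : HasDerivAt (fun s => Real.sin (u s + θa)) (Real.cos (u s + θa) * du s) s :=
      ((hu s).add_const θa).sin
    have ds2 : HasDerivAt (fun s => Real.sin (lam * u s + θb))
        (Real.cos (lam * u s + θb) * (lam * du s)) s :=
      (((hu s).const_mul lam).add_const θb).sin
    have hD := ((ds1.const_mul ρa).sub (ds2.const_mul (lam * ρb))).deriv
    simp only [Pi.sub_def] at hD
    rw [hAloc s hsj] at hD
    have h2 : (ρa * Real.cos (u s + θa) - lam ^ 2 * ρb * Real.cos (lam * u s + θb)) * du s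
        = 0 := by nlinarith [hD]
    exact (mul_eq_zero.mp h2).resolve_right (hdu_ne s hsj)
  -- derivative of B vanishes on J
  have hBloc : ∀ s ∈ J, deriv
      (fun s => ρa * Real.cos (u s + θa) - lam ^ 2 * ρb * Real.cos (lam * u s + θb)) s = 0 := by
    intro s hsj
    have hev : (fun s => ρa * Real.cos (u s + θa) - lam ^ 2 * ρb * Real.cos (lam * u s + θb))
        =ᶠ[nhds s] fun _ => (0 : ℝ) :=
      Filter.eventuallyEq_of_mem (hJopen.mem_nhds hsj) (fun t ht => hB0 t ht)
    rw [hev.deriv_eq, deriv_const]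
  -- C = 0 on J
  have hC0 : ∀ s ∈ J,
      ρa * Real.sin (u s + θa) - lam ^ 3 * ρb * Real.sin (lam * u s + θb) = 0 := by
    intro s hsj
    have dc1 : HasDerivAt (fun s => Real.cos (u s + θa)) (-Real.sin (u s + θa) * du s) s :=
      ((hu s).add_const θa).cos
    have dc2 : HasDerivAt (fun s => Real.cos (lam * u s + θb))
        (-Real.sin (lam * u s + θb) * (lam * du s)) s :=
      (((hu s).const_mul lam).add_const θb).cos
    have hD := ((dc1.const_mul ρa).sub (dc2.const_mul (lam ^ 2 * ρb))).deriv
    simp only [Pi.sub_def] at hD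
    rw [hBloc s hsj] at hD
    have h2 : (ρa * Real.sin (u s + θa) - lam ^ 3 * ρb * Real.sin (lam * u s + θb)) * du s
        = 0 := by nlinarith [hD]
    exact (mul_eq_zero.mp h2).resolve_right (hdu_ne s hsj)
  -- now conclude
  by_contra hne2
  have hfac : lam - lam ^ 3 ≠ 0 := by
    intro h
    apply hne2
    have : lam * (1 - lam ^ 2) = 0 := by ring_nf; linarith [h]
    rcases mul_eq_zero.mp this with h' | h'
    · exact absurd h' hlam
    · linarith
  have hsinb : ∀ s ∈ J, Real.sin (lam * u s + θb) = 0 := by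
    intro s hsj
    have h1 := hA0 s hsj
    have h2 := hC0 s hsj
    have h3 : (lam - lam ^ 3) * (ρb * Real.sin (lam * u s + θb)) = 0 := by nlinarith
    have h4 := (mul_eq_zero.mp h3).resolve_left hfac
    rcases mul_eq_zero.mp h4 with h' | h'
    · exact absurd h' (ne_of_gt hρb)
    · exact h'
  have hsina : ∀ s ∈ J, Real.sin (u s + θa) = 0 := by
    intro s hsj
    have h1 := hA0 s hsj
    rw [hsinb s hsj] at h1
    have : ρa * Real.sin (u s + θa) = 0 := by linarith [h1]
    exact (mul_eq_zero.mp this).resolve_left (ne_of_gt hρa)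
  -- differentiate sin(u + θa)
  have hev : (fun s => Real.sin (u s + θa)) =ᶠ[nhds sstar] fun _ => (0 : ℝ) :=
    Filter.eventuallyEq_of_mem (hJopen.mem_nhds hsJ) (fun t ht => hsina t ht)
  have hd0 : deriv (fun s => Real.sin (u s + θa)) sstar = 0 := by
    rw [hev.deriv_eq, deriv_const]
  have hds : HasDerivAt (fun s => Real.sin (u s + θa))
      (Real.cos (u sstar + θa) * du sstar) sstar := ((hu sstar).add_const θa).sin
  have hcos0 : Real.cos (u sstar + θa) = 0 := by
    have := hds.deriv
    rw [hd0] at this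
    exact (mul_eq_zero.mp this.symm).resolve_right hne
  have hsin0 : Real.sin (u sstar + θa) = 0 := hsina sstar hsJ
  have := Real.sin_sq_add_cos_sq (u sstar + θa)
  rw [hsin0, hcos0] at this
  norm_num at this
end
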